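/- arXiv:1404.7092 — 4 statements merged into one kernel-verified Lean document; each statement's English description precedes it below -/
import Mathlib

section
/- The class of languages recognized by n-headed automata is closed under intersection with regular languages: given an n-headed automaton U over Σ and a finite automaton V over Σ, there exists an n-headed automaton W with L(W) = L(U) ∩ L(V). -/
/-- A (nondeterministic, possibly ε-transition) automaton: states `S`,
alphabet `A`, transition relation (with `none` standing for ε),
initial state, and final states. -/
structure NAuto (S A : Type*) where
  step : S → Option A → S → Prop
  start : S
  final : S → Prop

/-- `Reaches M s w s'`: the automaton can go from `s` to `s'` reading the word `w`
(possibly using ε-transitions). -/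
inductive NAuto.Reaches {S A : Type*} (M : NAuto S A) : S → List A → S → Prop
  | refl (s : S) : Reaches M s [] s
  | eps {s s' s'' : S} {w : List A} :
      M.step s none s' → Reaches M s' w s'' → Reaches M s w s''
  | cons {s s' s'' : S} {a : A} {w : List A} :
      M.step s (some a) s' → Reaches M s' w s'' → Reaches M s (a :: w) s''

/-- The language of an automaton. -/
def NAuto.lang {S A : Type*} (M : NAuto S A) : Set (List A) :=
  {w | ∃ s, M.Reaches M.start w s ∧ M.final s}

/-- The language of an `n`-headed automaton over `A`, i.e. an automaton over
the alphabet `Fin n × A`: a word of the language is obtained from an accepted word `σ`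
by concatenating, for each head index `i` in increasing order, the `A`-components of
the letters of `σ` carrying head index `i`. -/
def mhLang {S A : Type*} (n : ℕ) (M : NAuto S (Fin n × A)) : Set (List A) :=
  {w | ∃ σ s, M.Reaches M.start σ s ∧ M.final s ∧
      w = ((List.finRange n).map
            (fun i => (σ.filter (fun p => decide (p.1 = i))).map Prod.snd)).flatten}

/-!
A word `w₁ ⋯ wₙ`, with `wᵢ` the letters of head `i`, is accepted by `V` iff there are states
`b 0 = V.start, b 1, …, b n` such that `V` goes from `b i` to `b (i + 1)` on `wᵢ` and from
`b n` to a final state by ε-moves. The automaton `W` guesses `b` in its first move and then runs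
`U` in lockstep with `n` copies of `V`, copy `i` starting in `b i` and reading exactly the letters
of head `i`; it accepts when `U` accepts and each copy `i` has arrived in `b (i + 1)`.
-/

namespace NAuto
variable {S T A : Type*} {M : NAuto S A}

theorem Reaches.append {s m t : S} {u v : List A}
    (hu : M.Reaches s u m) (hv : M.Reaches m v t) : M.Reaches s (u ++ v) t := by
  induction hu with
  | refl => exact hv
  | eps h _ ih => exact .eps h (ih hv)
  | cons h _ ih => exact .cons h (ih hv)

theorem Reaches.exists_of_cons {s t : S} {a : A} {w : List A} (h : M.Reaches s (a :: w) t) :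
    ∃ p q, M.Reaches s [] p ∧ M.step p (some a) q ∧ M.Reaches q w t := by
  generalize hw : a :: w = w' at h
  induction h with
  | refl => cases hw
  | eps h _ ih =>
    obtain ⟨p, q, hp, hpq, hq⟩ := ih hw
    exact ⟨p, q, .eps h hp, hpq, hq⟩
  | cons h hr _ =>
    cases hw
    exact ⟨_, _, .refl _, h, hr⟩

theorem reaches_append_iff {s t : S} {u v : List A} :
    M.Reaches s (u ++ v) t ↔ ∃ m, M.Reaches s u m ∧ M.Reaches m v t := by
  refine ⟨fun h => ?_, fun ⟨m, hu, hv⟩ => hu.append hv⟩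
  induction u generalizing s with
  | nil => exact ⟨s, .refl s, h⟩
  | cons a u ih =>
    obtain ⟨p, q, hp, hpq, hq⟩ := h.exists_of_cons
    obtain ⟨m, hu, hv⟩ := ih hq
    exact ⟨m, hp.append (.cons hpq hu), hv⟩

theorem reaches_flatten_ofFn_iff {n : ℕ} {s t : S} (f : Fin n → List A) :
    M.Reaches s (List.ofFn f).flatten t ↔ ∃ b : Fin (n + 1) → S, b 0 = s ∧
      (∀ i, M.Reaches (b i.castSucc) (f i) (b i.succ)) ∧ M.Reaches (b (Fin.last n)) [] t := by
  induction n generalizing s with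
  | zero =>
    simp only [List.ofFn_zero, List.flatten_nil, IsEmpty.forall_iff, true_and]
    exact ⟨fun h => ⟨fun _ => s, rfl, h⟩, fun ⟨b, hb, h⟩ => hb ▸ h⟩
  | succ n ih =>
    simp only [List.ofFn_succ, List.flatten_cons, reaches_append_iff, ih, Fin.exists_fin_succ_pi,
      Fin.forall_fin_succ, Fin.cons_zero, Fin.cons_succ, Fin.castSucc_zero, ← Fin.succ_castSucc,
      ← Fin.succ_last]
    grind

theorem Reaches.map {N : NAuto T A} (f : S → T)
    (hf : ∀ s o s', M.step s o s' → N.step (f s) o (f s')) {s t : S} {w : List A}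
    (h : M.Reaches s w t) : N.Reaches (f s) w (f t) := by
  induction h with
  | refl => exact .refl _
  | eps h _ ih => exact .eps (hf _ _ _ h) ih
  | cons h _ ih => exact .cons (hf _ _ _ h) ih

def equivMap (e : S ≃ T) (M : NAuto S A) : NAuto T A where
  step t o t' := M.step (e.symm t) o (e.symm t')
  start := e M.start
  final t := M.final (e.symm t)

theorem reaches_equivMap_iff (e : S ≃ T) {t t' : T} {w : List A} :
    (M.equivMap e).Reaches t w t' ↔ M.Reaches (e.symm t) w (e.symm t') := by
  refine ⟨Reaches.map e.symm fun _ _ _ h => h, fun h => ?_⟩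
  simpa using h.map (N := M.equivMap e) e fun _ _ _ h => by simpa [equivMap] using h

end NAuto

open NAuto

section HeadProjection
variable {A : Type*} {n : ℕ}

def headProj (i : Fin n) (σ : List (Fin n × A)) : List A :=
  (σ.filter (fun p => decide (p.1 = i))).map Prod.snd

theorem headProj_cons (i j : Fin n) (a : A) (σ : List (Fin n × A)) :
    headProj i ((j, a) :: σ) = if j = i then a :: headProj i σ else headProj i σ := by
  by_cases h : j = i <;> simp [headProj, h]

theorem mem_mhLang {S : Type*} {M : NAuto S (Fin n × A)} {w : List A} :
    w ∈ mhLang n M ↔ ∃ σ s, M.Reaches M.start σ s ∧ M.final s ∧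
      w = (List.ofFn fun i => headProj i σ).flatten := by
  simp [mhLang, headProj, List.ofFn_eq_map]

theorem mhLang_equivMap {S T : Type*} (e : S ≃ T) (M : NAuto S (Fin n × A)) :
    mhLang n (M.equivMap e) = mhLang n M := by
  ext w
  simp only [mem_mhLang, reaches_equivMap_iff, e.symm.exists_congr_left]
  simp [equivMap]

end HeadProjection

section InterAuto
variable {SU SV A : Type*} {n : ℕ}

/-- `none` is the initial state; in `some (s, c, b)`, `s` is the state of `U`, `c i` that of the
copy of `V` reading head `i`, and `b` the guessed border states. -/
abbrev InterState (SU SV : Type*) (n : ℕ) := Option (SU × (Fin n → SV) × (Fin (n + 1) → SV))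

inductive InterStep (U : NAuto SU (Fin n × A)) (V : NAuto SV A) :
    InterState SU SV n → Option (Fin n × A) → InterState SU SV n → Prop
  | guess (b : Fin (n + 1) → SV) :
      b 0 = V.start → InterStep U V none none (some (U.start, fun i => b i.castSucc, b))
  | stepU {s s' : SU} {c : Fin n → SV} {b : Fin (n + 1) → SV} :
      U.step s none s' → InterStep U V (some (s, c, b)) none (some (s', c, b))
  | stepV {s : SU} {c : Fin n → SV} {b : Fin (n + 1) → SV} (i : Fin n) {q : SV} :
      V.step (c i) none q →
      InterStep U V (some (s, c, b)) none (some (s, Function.update c i q, b))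
  | read {s s' : SU} {c : Fin n → SV} {b : Fin (n + 1) → SV} (i : Fin n) (a : A) {q : SV} :
      U.step s (some (i, a)) s' → V.step (c i) (some a) q →
      InterStep U V (some (s, c, b)) (some (i, a)) (some (s', Function.update c i q, b))

def interAuto (U : NAuto SU (Fin n × A)) (V : NAuto SV A) :
    NAuto (InterState SU SV n) (Fin n × A) where
  step := InterStep U V
  start := none
  final
    | none => False
    | some (s, c, b) => U.final s ∧ (∀ i, c i = b i.succ) ∧
        ∃ t, V.Reaches (b (Fin.last n)) [] t ∧ V.final t

variable {U : NAuto SU (Fin n × A)} {V : NAuto SV A}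

theorem interAuto_reaches_some {x y : InterState SU SV n} {σ : List (Fin n × A)}
    (h : (interAuto U V).Reaches x σ y) {s : SU} {c : Fin n → SV} {b : Fin (n + 1) → SV}
    (hx : x = some (s, c, b)) :
    ∃ s' c', y = some (s', c', b) ∧ U.Reaches s σ s' ∧
      ∀ i, V.Reaches (c i) (headProj i σ) (c' i) := by
  induction h generalizing s c with
  | refl => exact ⟨s, c, hx, .refl s, fun i => .refl (c i)⟩
  | eps h _ ih =>
    subst hx
    cases h with
    | stepU h =>
      obtain ⟨s', c', hy, hu, hv⟩ := ih rfl
      exact ⟨s', c', hy, .eps h hu, hv⟩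
    | stepV i h =>
      obtain ⟨s', c', hy, hu, hv⟩ := ih rfl
      refine ⟨s', c', hy, hu, fun j => ?_⟩
      rcases eq_or_ne j i with rfl | hji
      · exact .eps h (by simpa using hv j)
      · simpa [hji] using hv j
  | cons h _ ih =>
    subst hx
    cases h with
    | read i a hu hv =>
      obtain ⟨s', c', hy, hur, hvr⟩ := ih rfl
      refine ⟨s', c', hy, .cons hu hur, fun j => ?_⟩
      rcases eq_or_ne j i with rfl | hji
      · simpa [headProj_cons] using Reaches.cons hv (by simpa using hvr j)
      · simpa [headProj_cons, hji, Ne.symm hji] using hvr j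

theorem interAuto_reaches_update {s : SU} {c : Fin n → SV} {b : Fin (n + 1) → SV} {i : Fin n}
    {q : SV} (h : V.Reaches (c i) [] q) :
    (interAuto U V).Reaches (some (s, c, b)) [] (some (s, Function.update c i q, b)) := by
  generalize hp : c i = p at h
  generalize hw : ([] : List A) = w at h
  induction h generalizing c with
  | refl => simpa [← hp] using Reaches.refl _
  | eps h _ ih =>
    refine .eps (InterStep.stepV i (hp ▸ h)) ?_
    simpa using ih (c := Function.update c i _) (by simp) hw
  | cons _ _ _ => cases hw

theorem interAuto_reaches_piecewise {s : SU} {c c' : Fin n → SV} {b : Fin (n + 1) → SV}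
    (t : Finset (Fin n)) (h : ∀ i ∈ t, V.Reaches (c i) [] (c' i)) :
    (interAuto U V).Reaches (some (s, c, b)) [] (some (s, t.piecewise c' c, b)) := by
  induction t using Finset.induction_on with
  | empty => simpa using Reaches.refl _
  | insert j t hj ih =>
    rw [Finset.piecewise_insert]
    refine (ih fun i hi => h i (Finset.mem_insert_of_mem hi)).append
      (interAuto_reaches_update ?_)
    rw [Finset.piecewise_eq_of_notMem _ _ _ hj]
    exact h j (Finset.mem_insert_self j t)

theorem interAuto_reaches_of {s s' : SU} {σ : List (Fin n × A)} (h : U.Reaches s σ s')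
    (b : Fin (n + 1) → SV) {c c' : Fin n → SV}
    (hv : ∀ i, V.Reaches (c i) (headProj i σ) (c' i)) :
    (interAuto U V).Reaches (some (s, c, b)) σ (some (s', c', b)) := by
  induction h generalizing c with
  | refl => simpa using interAuto_reaches_piecewise Finset.univ fun i _ => hv i
  | eps h _ ih => exact .eps (InterStep.stepU h) (ih hv)
  | @cons s₀ s₁ _ ia σ h _ ih =>
    obtain ⟨i, a⟩ := ia
    obtain ⟨p, q, hp, hpq, hq⟩ := (by simpa [headProj_cons] using hv i :
      V.Reaches (c i) (a :: headProj i σ) (c' i)).exists_of_cons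
    have hread : (interAuto U V).step (some (s₀, Function.update c i p, b)) (some (i, a))
        (some (s₁, Function.update c i q, b)) := by
      have := InterStep.read (V := V) (c := Function.update c i p) (b := b) i a h
        (by simpa using hpq)
      rwa [Function.update_idem] at this
    refine (interAuto_reaches_update hp).append (.cons hread (ih fun j => ?_))
    rcases eq_or_ne j i with rfl | hji
    · simpa using hq
    · simpa [headProj_cons, hji, Ne.symm hji] using hv j

theorem mhLang_interAuto (U : NAuto SU (Fin n × A)) (V : NAuto SV A) :
    mhLang n (interAuto U V) = mhLang n U ∩ V.lang := by
  ext w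
  simp only [Set.mem_inter_iff, mem_mhLang, NAuto.lang, Set.mem_ofPred_eq]
  constructor
  · rintro ⟨σ, x, hr, hf, rfl⟩
    obtain ⟨b, hb0, hr⟩ : ∃ b, b 0 = V.start ∧
        (interAuto U V).Reaches (some (U.start, fun i => b i.castSucc, b)) σ x := by
      cases hr with
      | refl => exact hf.elim
      | eps h hr => cases h with | guess b hb => exact ⟨b, hb, hr⟩
      | cons h _ => cases h
    obtain ⟨s, c, rfl, hu, hv⟩ := interAuto_reaches_some hr rfl
    obtain ⟨hs, hc, t, hbt, ht⟩ := hf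
    exact ⟨⟨σ, s, hu, hs, rfl⟩, t,
      (reaches_flatten_ofFn_iff _).2 ⟨b, hb0, fun i => hc i ▸ hv i, hbt⟩, ht⟩
  · rintro ⟨⟨σ, s, hu, hs, rfl⟩, t, hv, ht⟩
    obtain ⟨b, hb0, hb, hbt⟩ := (reaches_flatten_ofFn_iff _).1 hv
    exact ⟨σ, some (s, fun i => b i.succ, b),
      .eps (InterStep.guess b hb0) (interAuto_reaches_of hu b hb),
      ⟨hs, fun _ => rfl, t, hbt, ht⟩, rfl⟩

end InterAuto

/-- languages of n-headed automata are closed under intersection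
with regular languages: for an n-headed automaton `U` and a finite automaton `V`
over a common alphabet, there is an n-headed automaton `W` with
`L(W) = L(U) ∩ L(V)`. -/
theorem mh_inter_regular {SU SV A : Type*} [Fintype SU] [Fintype SV]
    (n : ℕ) (U : NAuto SU (Fin n × A)) (V : NAuto SV A) :
    ∃ (SW : Type) (_ : Fintype SW) (W : NAuto SW (Fin n × A)),
      mhLang n W = mhLang n U ∩ V.lang := by
  exact ⟨_, inferInstance, (interAuto U V).equivMap (Fintype.equivFin _),
    by rw [mhLang_equivMap, mhLang_interAuto]⟩
end

section
/- Let G = (V, E) be a finite directed graph whose vertex set is partitioned into threads T₁, …, T_k, where each E = po ∪ hop, po is a union of disjoint total orders (one per thread, linking only vertices within the same thread), and hop is an arbitrary relation. If G contains a cycle, then G contains a 'beautiful' cycle of the form v₁ →_{po}* v₁' →_{hop} v₂ →_{po}* v₂' →_{hop} … →_{hop} vₙ →_{po}* vₙ' →_{hop} v₁ in which each thread is visited at most once (the threads of v₁, …, vₙ are pairwise distinct). -/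
/-!
Group every maximal `po`-run of a cycle together with the `hop` edge leaving it: since `po` is
acyclic the cycle contains a `hop` edge, so it becomes a cyclic sequence of steps `po* ; hop`.
Take such a sequence of minimal length. If two of its starting points `vᵢ`, `vⱼ` lay in the
same thread they would be `po*`-comparable, and following `po` from one to the other cuts the
cycle short, contradicting minimality.
-/

open Relation Function

namespace BeautifulCycle

section PeriodicChain

variable {α : Type*} {R : α → α → Prop}

/-- A closed walk of length `n` in `R`, unrolled into an `n`-periodic sequence. -/
def IsPeriodicChain (R : α → α → Prop) (n : ℕ) (f : ℕ → α) : Prop :=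
  0 < n ∧ Periodic f n ∧ ∀ k, R (f k) (f (k + 1))

theorem isPeriodicChain_mod {n : ℕ} (hn : 0 < n) {f : ℕ → α}
    (hstep : ∀ k, k + 1 < n → R (f k) (f (k + 1))) (hclose : R (f (n - 1)) (f 0)) :
    IsPeriodicChain R n (fun k => f (k % n)) := by
  refine ⟨hn, fun k => by simp, fun k => ?_⟩
  show R (f (k % n)) (f ((k + 1) % n))
  rw [← Nat.mod_add_mod]
  obtain hlt | heq : k % n + 1 < n ∨ k % n + 1 = n := by have := Nat.mod_lt k hn; omega
  · rw [Nat.mod_eq_of_lt hlt]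
    exact hstep _ hlt
  · rw [heq, Nat.mod_self, (by omega : k % n = n - 1)]
    exact hclose

theorem exists_path_of_transGen {a b : α} (h : TransGen R a b) :
    ∃ n, 0 < n ∧ ∃ f : ℕ → α, f 0 = a ∧ f n = b ∧ ∀ k < n, R (f k) (f (k + 1)) := by
  induction h using TransGen.head_induction_on with
  | single hab => exact ⟨1, one_pos, fun k => if k = 0 then _ else b, rfl, rfl, by simpa⟩
  | @head a c hac _ ih =>
    obtain ⟨n, -, f, hf0, hfn, hf⟩ := ih
    refine ⟨n + 1, n.succ_pos, fun k => if k = 0 then a else f (k - 1), rfl, by simpa, ?_⟩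
    rintro (_ | k) hk
    · simpa [hf0] using hac
    · simpa using hf k (by omega)

theorem exists_isPeriodicChain_of_transGen {a : α} (h : TransGen R a a) :
    ∃ n f, IsPeriodicChain R n f := by
  obtain ⟨n, hn, f, hf0, hfn, hf⟩ := exists_path_of_transGen h
  refine ⟨n, _, isPeriodicChain_mod hn (fun k hk => hf k (by omega)) ?_⟩
  have hlast := hf (n - 1) (by omega)
  rwa [Nat.sub_add_cancel hn, hfn, ← hf0] at hlast

theorem IsPeriodicChain.shortcut {m : ℕ} {f : ℕ → α} (hf : IsPeriodicChain R m f) {a b : ℕ}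
    (hab : a < b) (hclose : R (f b) (f (a + 1))) :
    IsPeriodicChain R (b - a) (fun k => f (a + 1 + k % (b - a))) :=
  isPeriodicChain_mod (f := fun k => f (a + 1 + k)) (by omega) (fun k _ => hf.2.2 _)
    (by rwa [(by omega : a + 1 + (b - a - 1) = b)])

end PeriodicChain

variable {V T : Type*} {po hop : V → V → Prop}

variable (po hop) in
def PoHopStep (a b : V) : Prop :=
  ∃ w, ReflTransGen po a w ∧ hop w b

theorem PoHopStep.po_head {a b c : V} (hab : ReflTransGen po a b) (hbc : PoHopStep po hop b c) :
    PoHopStep po hop a c :=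
  let ⟨w, hbw, hwc⟩ := hbc
  ⟨w, hab.trans hbw, hwc⟩

theorem exists_poHopStep_path {a b : V}
    (h : ReflTransGen (fun x y => po x y ∨ hop x y) a b) :
    ∃ d, ReflTransGen (PoHopStep po hop) a d ∧ ReflTransGen po d b := by
  induction h with
  | refl => exact ⟨a, .refl, .refl⟩
  | tail _ hbc ih =>
    obtain ⟨d, had, hdb⟩ := ih
    rcases hbc with hpo | hhop
    · exact ⟨d, had, hdb.tail hpo⟩
    · exact ⟨_, had.tail ⟨_, hdb, hhop⟩, .refl⟩

theorem exists_transGen_poHopStep_of_cycle (hpo_acyclic : ∀ a, ¬ TransGen po a a) {a : V}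
    (h : TransGen (fun x y => po x y ∨ hop x y) a a) :
    ∃ x, TransGen (PoHopStep po hop) x x := by
  obtain ⟨c, hac, hca⟩ := TransGen.tail'_iff.mp h
  obtain ⟨d, had, hdc⟩ := exists_poHopStep_path hac
  rcases hca with hpo | hhop
  · -- the walk `a ⇝ d` must contain a step, since otherwise `a →po+ a`; rotate past it
    have hda : TransGen po d a := TransGen.tail' hdc hpo
    rcases had.cases_head with rfl | ⟨e, hae, hed⟩
    · exact absurd hda (hpo_acyclic _)
    · exact ⟨e, TransGen.tail' hed (PoHopStep.po_head hda.to_reflTransGen hae)⟩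
  · exact ⟨a, TransGen.tail' had ⟨c, hdc, hhop⟩⟩

theorem reflTransGen_or_of_thread_eq {thread : V → T}
    (hpo_total : ∀ a b, thread a = thread b → a ≠ b → TransGen po a b ∨ TransGen po b a)
    {a b : V} (h : thread a = thread b) : ReflTransGen po a b ∨ ReflTransGen po b a := by
  rcases eq_or_ne a b with rfl | hne
  · exact .inl .refl
  · exact (hpo_total a b h hne).imp TransGen.to_reflTransGen TransGen.to_reflTransGen

theorem exists_isPeriodicChain_injOn_thread {thread : V → T}
    (hpo_total : ∀ a b, thread a = thread b → a ≠ b → TransGen po a b ∨ TransGen po b a)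
    (h : ∃ n f, IsPeriodicChain (PoHopStep po hop) n f) :
    ∃ n f, IsPeriodicChain (PoHopStep po hop) n f ∧ Set.InjOn (thread ∘ f) (Set.Iio n) := by
  classical
  obtain ⟨f, hf⟩ := Nat.find_spec h
  refine ⟨_, f, hf, fun i (hi : i < _) j (hj : j < _) hij => ?_⟩
  by_contra hne
  wlog hlt : i < j generalizing i j
  · exact this j hj i hi hij.symm (Ne.symm hne) (by omega)
  rcases reflTransGen_or_of_thread_eq hpo_total hij with hpo | hpo
  · -- wrap around the period: keep `f (j + 1), …, f (i + n)`, where `f (i + n) = f i`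
    have hpo' : ReflTransGen po (f (i + Nat.find h)) (f j) := by rwa [hf.2.1 i]
    have := Nat.find_min' h ⟨_, hf.shortcut (by omega : j < i + Nat.find h)
      (PoHopStep.po_head hpo' (hf.2.2 j))⟩
    omega
  · have := Nat.find_min' h ⟨_, hf.shortcut hlt (PoHopStep.po_head hpo (hf.2.2 i))⟩
    omega

end BeautifulCycle

open BeautifulCycle in
theorem beautiful_cycle_general {V T : Type*} (thread : V → T)
    (po hop : V → V → Prop)
    (hpo_acyclic : ∀ a, ¬ Relation.TransGen po a a)
    (hpo_total : ∀ a b, thread a = thread b → a ≠ b →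
        Relation.TransGen po a b ∨ Relation.TransGen po b a)
    (hcycle : ∃ a, Relation.TransGen (fun x y => po x y ∨ hop x y) a a) :
    ∃ (m : ℕ) (hm : 0 < m) (v w : Fin m → V),
      Function.Injective (fun i => thread (v i)) ∧
      (∀ i, Relation.ReflTransGen po (v i) (w i)) ∧
      (∀ i : Fin m, hop (w i) (v ⟨((i : ℕ) + 1) % m, Nat.mod_lt _ hm⟩)) := by
  obtain ⟨a, ha⟩ := hcycle
  obtain ⟨x, hx⟩ := exists_transGen_poHopStep_of_cycle hpo_acyclic ha
  obtain ⟨m, f, ⟨hm, hper, hstep⟩, hinj⟩ :=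
    exists_isPeriodicChain_injOn_thread hpo_total (exists_isPeriodicChain_of_transGen hx)
  choose w hfw hwf using fun i : Fin m => hstep i
  refine ⟨m, hm, fun i => f i, w, fun i j hij => Fin.ext (hinj i.isLt j.isLt hij), hfw,
    fun i => ?_⟩
  simpa only [hper.map_mod_nat] using hwf i

/-- in a finite directed graph whose vertices are partitioned into threads,
where `po` links only vertices of the same thread and is (the successor structure of) a
strict total order within each thread (expressed as: its transitive closure is irreflexive
and any two distinct vertices of a common thread are comparable), and `hop` is arbitrary:
if the graph `po ∪ hop` has a cycle, then it has a "beautiful" cycle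
`v₁ →po* w₁ →hop v₂ →po* w₂ →hop … →hop vₘ →po* wₘ →hop v₁`
whose segments visit pairwise distinct threads. -/
theorem beautiful_cycle {V T : Type*} [Fintype V] (thread : V → T)
    (po hop : V → V → Prop)
    (hpo_thread : ∀ a b, po a b → thread a = thread b)
    (hpo_acyclic : ∀ a, ¬ Relation.TransGen po a a)
    (hpo_total : ∀ a b, thread a = thread b → a ≠ b →
        Relation.TransGen po a b ∨ Relation.TransGen po b a)
    (hcycle : ∃ a, Relation.TransGen (fun x y => po x y ∨ hop x y) a a) :
    ∃ (m : ℕ) (hm : 0 < m) (v w : Fin m → V),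
      Function.Injective (fun i => thread (v i)) ∧
      (∀ i, Relation.ReflTransGen po (v i) (w i)) ∧
      (∀ i : Fin m, hop (w i) (v ⟨((i : ℕ) + 1) % m, Nat.mod_lt _ hm⟩)) :=
  beautiful_cycle_general thread po hop hpo_acyclic hpo_total hcycle
end

section
/- In the Power semantics, the accepting state reached by a computation is unique: if the initial state s₀ of the Power automaton of a program reaches final states s and s' via the same event sequence σ, then s = s'. -/
/-! A formalization of the (corrected) operational Power memory model of
Sarkar et al., following "Lazy TSO Reachability"-style conventions:
programs are finite families of thread automata over commands; the Power
semantics is a labeled transition system over runtime thread states and a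
storage-subsystem state, with fetch / load / commit / propagate events. -/

namespace PowerModel

/-- Values and addresses come from a common domain, here `ℕ` (containing `0`). -/
abbrev Val := ℕ
/-- Register names. -/
abbrev Reg := ℕ

/-- Expressions over constants, registers and (binary) functions on the domain;
functions return `⊥` iff some argument is `⊥`, which is realized by `Option`-strictness
in the evaluator. -/
inductive Expr : Type
  | const : Val → Expr
  | reg : Reg → Expr
  | fn : (Val → Val → Val) → Expr → Expr → Expr

/-- Commands: loads, stores, local assignments and conditionals. -/
inductive Cmd : Type
  | load : Reg → Expr → Cmd
  | store : Expr → Expr → Cmd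
  | assign : Reg → Expr → Cmd
  | assume_ : Expr → Cmd

def Cmd.isLoad : Cmd → Prop
  | .load _ _ => True
  | _ => False

def Cmd.isStore : Cmd → Prop
  | .store _ _ => True
  | _ => False

def Cmd.isMem : Cmd → Prop
  | .load _ _ => True
  | .store _ _ => True
  | _ => False

/-- An instruction of a thread automaton: source control state, command,
destination control state. -/
structure Instr where
  src : ℕ
  cmd : Cmd
  dst : ℕ

/-- A thread is an automaton over commands: an initial control state and a set of
instructions (all control states are final). -/
structure Thread where
  start : ℕ
  instrs : Set Instr

/-- A program with `n` threads. -/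
abbrev Program (n : ℕ) := Fin n → Thread

/-- Identifier of a store: either the initial store to an address, or the `i`-th
fetched instruction of thread `t`. -/
inductive StoreId (n : ℕ) : Type
  | init : Val → StoreId n
  | st : Fin n → ℕ → StoreId n

/-- Runtime state of a thread: the sequence of fetched instructions, the set of
indices of committed instructions, and for every satisfied load its source store
together with the value read. -/
structure TState (n : ℕ) where
  fetched : List Instr
  committed : Set ℕ
  loaded : ℕ → Option (StoreId n × Val)

/-- Does the command write to register `r`? -/
def Cmd.writesTo : Cmd → Reg → Bool
  | .load r _, r' => r == r'
  | .assign r _, r' => r == r'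
  | _, _ => false

/-- Index of the last instruction before position `i` writing to register `r`. -/
def lastWrite (f : List Instr) (i : ℕ) (r : Reg) : Option ℕ :=
  (List.range i).reverse.find? (fun j =>
    match f[j]? with
    | some ins => ins.cmd.writesTo r
    | none => false)

/-- Evaluate an expression given a (partial) register valuation; strict in `⊥`. -/
def evalWith (ρ : Reg → Option Val) : Expr → Option Val
  | .const v => some v
  | .reg r => ρ r
  | .fn g e₁ e₂ => (evalWith ρ e₁).bind fun a => (evalWith ρ e₂).map fun b => g a b

/-- Value of register `r` right before the `i`-th fetched instruction
(`fuel`-bounded recursion; the chain of defining instructions strictly decreases,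
so `fuel = i + 1` computes the true value). `none` is `⊥`. -/
def regV {n : ℕ} (f : List Instr) (ld : ℕ → Option (StoreId n × Val)) :
    ℕ → ℕ → Reg → Option Val
  | 0, _, _ => none
  | fuel + 1, i, r =>
    match lastWrite f i r with
    | none => some 0
    | some i' =>
      match f[i']? with
      | some ins =>
        match ins.cmd with
        | .assign _ e => evalWith (fun r' => regV f ld fuel i' r') e
        | .load _ _ => (ld i').map Prod.snd
        | _ => none
      | none => none

/-- Evaluation of expression `e` at the `i`-th fetched instruction of a thread. -/
def evalE {n : ℕ} (f : List Instr) (ld : ℕ → Option (StoreId n × Val))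
    (i : ℕ) (e : Expr) : Option Val :=
  evalWith (fun r => regV f ld (i + 1) i r) e

namespace TState

variable {n : ℕ}

def eval (ts : TState n) (i : ℕ) (e : Expr) : Option Val :=
  evalE ts.fetched ts.loaded i e

def cmdAt (ts : TState n) (i : ℕ) : Option Cmd :=
  (ts.fetched[i]?).map Instr.cmd

/-- Address argument of the `i`-th fetched instruction (`none` = `⊥` or `⊤`). -/
def getaddr (ts : TState n) (i : ℕ) : Option Val :=
  match ts.cmdAt i with
  | some (.load _ ea) => ts.eval i ea
  | some (.store ea _) => ts.eval i ea
  | _ => none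

/-- Value argument of the `i`-th fetched instruction (`none` = `⊥` or `⊤`). -/
def getvalue (ts : TState n) (i : ℕ) : Option Val :=
  match ts.cmdAt i with
  | some (.store _ ev) => ts.eval i ev
  | some (.assign _ ev) => ts.eval i ev
  | some (.assume_ ev) => ts.eval i ev
  | _ => none

end TState

/-- Dependencies of an expression via a register-dependency oracle. -/
def exprDepsWith (ρ : Reg → Set ℕ) : Expr → Set ℕ
  | .const _ => ∅
  | .reg r => ρ r
  | .fn _ e₁ e₂ => exprDepsWith ρ e₁ ∪ exprDepsWith ρ e₂

/-- Indices of the instructions on which the value of register `r` before position `i`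
depends (loads and, transitively through assignments, their dependencies). -/
def regDeps (f : List Instr) : ℕ → ℕ → Reg → Set ℕ
  | 0, _, _ => ∅
  | fuel + 1, i, r =>
    match lastWrite f i r with
    | none => ∅
    | some i' =>
      {i'} ∪
        (match f[i']? with
         | some ins =>
           match ins.cmd with
           | .assign _ e => exprDepsWith (fun r' => regDeps f fuel i' r') e
           | _ => ∅
         | none => ∅)

def exprDeps (f : List Instr) (i : ℕ) (e : Expr) : Set ℕ :=
  exprDepsWith (fun r => regDeps f (i + 1) i r) e

namespace TState

variable {n : ℕ}

/-- Address dependencies of the `i`-th fetched instruction. -/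
def addrDeps (ts : TState n) (i : ℕ) : Set ℕ :=
  match ts.cmdAt i with
  | some (.load _ ea) => exprDeps ts.fetched i ea
  | some (.store ea _) => exprDeps ts.fetched i ea
  | _ => ∅

/-- Data dependencies of the `i`-th fetched instruction. -/
def dataDeps (ts : TState n) (i : ℕ) : Set ℕ :=
  match ts.cmdAt i with
  | some (.store _ ev) => exprDeps ts.fetched i ev
  | some (.assign _ ev) => exprDeps ts.fetched i ev
  | some (.assume_ ev) => exprDeps ts.fetched i ev
  | _ => ∅

/-- Control dependencies: all earlier fetched conditionals. -/
def ctrlDeps (ts : TState n) (i : ℕ) : Set ℕ :=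
  {i' | i' < i ∧ ∃ e, ts.cmdAt i' = some (.assume_ e)}

end TState

/-- State of the storage subsystem: coherence keys of committed stores, and for each
thread and address the last store propagated to that thread. -/
structure SState (n : ℕ) where
  coh : Fin n → ℕ → Option ℚ
  propTo : Fin n → Val → StoreId n

/-- Coherence key of a store (initial stores have key `0`). -/
def SState.keyOf {n : ℕ} (ss : SState n) : StoreId n → ℚ
  | .init _ => 0
  | .st t i => (ss.coh t i).getD 0

/-- A state of the Power automaton. -/
structure PState (n : ℕ) where
  rt : Fin n → TState n
  ss : SState n

/-- Value written by a store, computed in the thread that issued it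
(initial stores write `0`). -/
def storeVal {n : ℕ} (s : PState n) : StoreId n → Option Val
  | .init _ => some 0
  | .st t i => (s.rt t).getvalue i

/-- Events of the Power semantics. -/
inductive Event (n : ℕ) : Type
  | fetch : Fin n → ℕ → Instr → Event n
  | load : Fin n → ℕ → Val → Event n
  | commit : Fin n → ℕ → Event n
  | commitStore : Fin n → ℕ → ℚ → Val → Event n
  | prop : Fin n → Fin n → ℕ → Val → Event n

/-- The instruction (thread id, fetch index) an event belongs to. -/
def Event.instrOf {n : ℕ} : Event n → Fin n × ℕ
  | .fetch t i _ => (t, i)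
  | .load t i _ => (t, i)
  | .commit t i => (t, i)
  | .commitStore t i _ _ => (t, i)
  | .prop _ t' i _ => (t', i)

/-- Common preconditions for committing the `i`-th fetched instruction of thread `t`:
it is fetched, not yet committed, all its address, data and control dependencies are
committed, and (for memory accesses) all earlier fetched accesses to the same or to a
still-unknown address are committed. -/
def canCommit {n : ℕ} (s : PState n) (t : Fin n) (i : ℕ) : Prop :=
  i < (s.rt t).fetched.length ∧ i ∉ (s.rt t).committed ∧
  ((s.rt t).addrDeps i ∪ (s.rt t).dataDeps i ∪ (s.rt t).ctrlDeps i) ⊆ (s.rt t).committed ∧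
  (∀ a, (s.rt t).getaddr i = some a →
    ∀ i' < i, (∃ c, (s.rt t).cmdAt i' = some c ∧ c.isMem) →
      ((s.rt t).getaddr i' = none ∨ (s.rt t).getaddr i' = some a) →
      i' ∈ (s.rt t).committed)

/-- The transition relation of the Power automaton of a program. -/
inductive Step {n : ℕ} (P : Program n) : PState n → Event n → PState n → Prop
  /-- POW-FETCH -/
  | fetch {s : PState n} {t : Fin n} {ins : Instr} :
      ins ∈ (P t).instrs →
      ins.src = (match (s.rt t).fetched.getLast? with
                 | some lst => lst.dst
                 | none => (P t).start) →
      Step P s (.fetch t (s.rt t).fetched.length ins)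
        { s with rt := (Function.update s.rt t
            { s.rt t with fetched := (s.rt t).fetched ++ [ins] }) }
  /-- POW-LOAD: read from the last store propagated to the thread. -/
  | loadMem {s : PState n} {t : Fin n} {i : ℕ} {a v : Val} {w : StoreId n} :
      (∃ r ea, (s.rt t).cmdAt i = some (.load r ea)) →
      (s.rt t).loaded i = none →
      (s.rt t).getaddr i = some a →
      w = s.ss.propTo t a →
      storeVal s w = some v →
      Step P s (.load t i a)
        { s with rt := (Function.update s.rt t
            { s.rt t with loaded := Function.update (s.rt t).loaded i (some (w, v)) }) }
  /-- POW-EARLY: forward the value of the latest uncommitted program-order-earlier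
  store to the same address. -/
  | loadEarly {s : PState n} {t : Fin n} {i i' : ℕ} {a v : Val} :
      (∃ r ea, (s.rt t).cmdAt i = some (.load r ea)) →
      (s.rt t).loaded i = none →
      (s.rt t).getaddr i = some a →
      i' < i →
      (∃ ea ev, (s.rt t).cmdAt i' = some (.store ea ev)) →
      (s.rt t).getaddr i' = some a →
      (∀ j, i' < j → j < i → (∃ ea ev, (s.rt t).cmdAt j = some (.store ea ev)) →
        ¬((s.rt t).getaddr j = none ∨ (s.rt t).getaddr j = some a)) →
      (s.rt t).getvalue i' = some v →
      i' ∉ (s.rt t).committed →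
      Step P s (.load t i a)
        { s with rt := (Function.update s.rt t
            { s.rt t with loaded := Function.update (s.rt t).loaded i (some (.st t i', v)) }) }
  /-- POW-COMMIT (non-store instructions). -/
  | commitSimple {s : PState n} {t : Fin n} {i : ℕ} :
      canCommit s t i →
      (∀ c, (s.rt t).cmdAt i = some c → ¬ c.isStore) →
      (∀ r ea, (s.rt t).cmdAt i = some (.load r ea) →
        (s.rt t).loaded i ≠ none ∧ ∃ a, (s.rt t).getaddr i = some a) →
      (∀ r ev, (s.rt t).cmdAt i = some (.assign r ev) → ∃ v, (s.rt t).getvalue i = some v) →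
      (∀ ev, (s.rt t).cmdAt i = some (.assume_ ev) →
        ∃ v, (s.rt t).getvalue i = some v ∧ v ≠ 0) →
      Step P s (.commit t i)
        { s with rt := (Function.update s.rt t
            { s.rt t with committed := insert i (s.rt t).committed }) }
  /-- POW-STORE: commit a store, assigning it a fresh coherence key. -/
  | commitStore {s : PState n} {t : Fin n} {i : ℕ} {k : ℚ} {a v : Val} :
      canCommit s t i →
      (∃ ea ev, (s.rt t).cmdAt i = some (.store ea ev)) →
      (s.rt t).getaddr i = some a →
      (s.rt t).getvalue i = some v →
      (∀ t' i', s.ss.coh t' i' ≠ some k) →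
      Step P s (.commitStore t i k a)
        ⟨Function.update s.rt t { s.rt t with committed := insert i (s.rt t).committed },
         { s.ss with coh := (Function.update s.ss.coh t
             (Function.update (s.ss.coh t) i (some k))) }⟩
  /-- POW-PROP: propagate a committed store to a thread, provided it is
  coherence-order-later than the last store to this address propagated there. -/
  | propagate {s : PState n} {t t' : Fin n} {i' : ℕ} {a : Val} {k : ℚ} :
      s.ss.coh t' i' = some k →
      (∃ ea ev, (s.rt t').cmdAt i' = some (.store ea ev)) →
      (s.rt t').getaddr i' = some a →
      s.ss.keyOf (s.ss.propTo t a) < k →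
      Step P s (.prop t t' i' a)
        { s with ss := ({ s.ss with propTo := (Function.update s.ss.propTo t
            (Function.update (s.ss.propTo t) a (.st t' i'))) }) }

/-- Multi-step runs, recording the produced event sequence. -/
inductive Run {n : ℕ} (P : Program n) : PState n → List (Event n) → PState n → Prop
  | refl (s : PState n) : Run P s [] s
  | step {s s' s'' : PState n} {e : Event n} {σ : List (Event n)} :
      Step P s e s' → Run P s' σ s'' → Run P s (e :: σ) s''

/-- The initial state of the Power automaton. -/
def initState (n : ℕ) : PState n :=
  ⟨fun _ => ⟨[], ∅, fun _ => none⟩, ⟨fun _ _ => none, fun _ a => .init a⟩⟩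

/-- Final states: all fetched instructions are committed (FIN-COMM), loads of a common
address agree with the coherence order (FIN-LD), and loads agree with program-order-earlier
stores of the same thread to the same address (FIN-LD-ST). -/
def FinalState {n : ℕ} (s : PState n) : Prop :=
  ∀ t : Fin n,
    (∀ i, i < (s.rt t).fetched.length ↔ i ∈ (s.rt t).committed) ∧
    (∀ i i' a, i' < i →
      (s.rt t).getaddr i = some a → (s.rt t).getaddr i' = some a →
      (∃ r ea, (s.rt t).cmdAt i = some (.load r ea)) →
      (∃ r ea, (s.rt t).cmdAt i' = some (.load r ea)) →
      ∀ w v w' v', (s.rt t).loaded i = some (w, v) → (s.rt t).loaded i' = some (w', v') →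
        s.ss.keyOf w' ≤ s.ss.keyOf w) ∧
    (∀ i i' a, i' < i →
      (s.rt t).getaddr i = some a → (s.rt t).getaddr i' = some a →
      (∃ r ea, (s.rt t).cmdAt i = some (.load r ea)) →
      (∃ ea ev, (s.rt t).cmdAt i' = some (.store ea ev)) →
      ∀ w v, (s.rt t).loaded i = some (w, v) →
        s.ss.keyOf (.st t i') ≤ s.ss.keyOf w)

/-- A store-commit event is immediately followed by the propagation of that store
to its own thread. -/
def ImmediateProp {n : ℕ} (σ : List (Event n)) : Prop :=
  ∀ σ₁ (t : Fin n) (i : ℕ) (k : ℚ) (a : Val) σ₂,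
    σ = σ₁ ++ Event.commitStore t i k a :: σ₂ →
    ∃ σ₃, σ₂ = Event.prop t t i a :: σ₃

/-- The set of Power computations of a program. -/
def CPower {n : ℕ} (P : Program n) : Set (List (Event n)) :=
  {σ | ∃ s, Run P (initState n) σ s ∧ FinalState s ∧ ImmediateProp σ}

end PowerModel

/-! Every event label determines the successor state, except that a load event may be satisfied
either from memory (POW-LOAD) or by forwarding (POW-EARLY). Forwarding is pinned down by the
latest earlier store to the address. Reading from memory while an earlier store `i'` to the same
address is still uncommitted cannot end in a final state: `i'` must eventually commit with some
key `k`, and its immediate propagation to its own thread requires `k` to exceed the key of the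
store that thread sees at that address; those keys only grow, so `i'` ends up coherence-later
than the store the load read, contradicting FIN-LD-ST. Keys of propagated stores never change,
by the invariant `PState.WellFormed` of reachable states. -/

namespace PowerModel

variable {n : ℕ}

theorem update_apply_eq_some_of_eq_none {α β : Type*} [DecidableEq α] {f : α → Option β} {a : α}
    (ha : f a = none) (b : Option β) {x : α} {y : β} (hx : f x = some y) :
    Function.update f a b x = some y := by
  rwa [Function.update_of_ne]
  rintro rfl
  simp_all

theorem evalWith_mono {ρ ρ' : Reg → Option Val} (h : ∀ r x, ρ r = some x → ρ' r = some x) :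
    ∀ (e : Expr) {v : Val}, evalWith ρ e = some v → evalWith ρ' e = some v
  | .const _, _, hv => hv
  | .reg r, _, hv => h r _ hv
  | .fn g e₁ e₂, v, hv => by
    simp only [evalWith, Option.bind_eq_some_iff, Option.map_eq_some_iff] at hv ⊢
    obtain ⟨a, ha, b, hb, rfl⟩ := hv
    exact ⟨a, evalWith_mono h e₁ ha, b, evalWith_mono h e₂ hb, rfl⟩

theorem lastWrite_congr {f f' : List Instr} {i : ℕ} (h : ∀ j < i, f[j]? = f'[j]?) (r : Reg) :
    lastWrite f i r = lastWrite f' i r :=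
  List.find?_congr fun j hj => by rw [h j (by simpa using hj)]

theorem lastWrite_lt {f : List Instr} {i i' : ℕ} {r : Reg} (h : lastWrite f i r = some i') :
    i' < i := by
  simpa using List.mem_of_find?_eq_some h

theorem regV_mono {f f' : List Instr} {ld ld' : ℕ → Option (StoreId n × Val)}
    (hld : ∀ j p, ld j = some p → ld' j = some p) :
    ∀ (fuel i : ℕ), (∀ j < i, f[j]? = f'[j]?) →
      ∀ (r : Reg) (v : Val), regV f ld fuel i r = some v → regV f' ld' fuel i r = some v := by
  intro fuel
  induction fuel with
  | zero => simp [regV]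
  | succ fuel ih =>
    intro i hf r v hv
    rw [regV, lastWrite_congr hf r] at hv
    rw [regV]
    rcases hlw : lastWrite f' i r with _ | i'
    · simpa [hlw] using hv
    have hi' := lastWrite_lt hlw
    simp only [hlw, ← hf i' hi'] at hv ⊢
    rcases hg : f[i']? with _ | ins
    · simp [hg] at hv
    simp only [hg] at hv ⊢
    rcases hc : ins.cmd with _ | _ | _ | _ <;>
      simp only [hc, Option.map_eq_some_iff, reduceCtorEq] at hv ⊢
    case load =>
      obtain ⟨p, hp, rfl⟩ := hv
      exact ⟨p, hld _ _ hp, rfl⟩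
    case assign =>
      exact evalWith_mono (fun r' x hx => ih i' (fun j hj => hf j (hj.trans hi')) r' x hx) _ hv

namespace TState

structure Extends (ts ts' : TState n) : Prop where
  fetched : ts.fetched <+: ts'.fetched
  loaded : ∀ j p, ts.loaded j = some p → ts'.loaded j = some p
  committed : ts.committed ⊆ ts'.committed

theorem Extends.refl (ts : TState n) : ts.Extends ts :=
  ⟨List.prefix_rfl, fun _ _ h => h, subset_rfl⟩

theorem Extends.trans {ts₁ ts₂ ts₃ : TState n} (h : ts₁.Extends ts₂) (h' : ts₂.Extends ts₃) :
    ts₁.Extends ts₃ :=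
  ⟨h.fetched.trans h'.fetched, fun j p hp => h'.loaded j p (h.loaded j p hp),
    h.committed.trans h'.committed⟩

theorem lt_length_of_cmdAt_eq_some {ts : TState n} {i : ℕ} {c : Cmd} (h : ts.cmdAt i = some c) :
    i < ts.fetched.length := by
  obtain ⟨_, hi, -⟩ := Option.map_eq_some_iff.mp h
  exact (List.getElem?_eq_some_iff.mp hi).1

variable {ts ts' : TState n} {i : ℕ}

theorem Extends.getElem?_eq (h : ts.Extends ts') (hi : i < ts.fetched.length) :
    ts'.fetched[i]? = ts.fetched[i]? := by
  obtain ⟨l, hl⟩ := h.fetched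
  rw [← hl, List.getElem?_append_left hi]

theorem Extends.cmdAt {c : Cmd} (h : ts.Extends ts') (hc : ts.cmdAt i = some c) :
    ts'.cmdAt i = some c := by
  rw [TState.cmdAt, h.getElem?_eq (lt_length_of_cmdAt_eq_some hc)]
  exact hc

theorem Extends.eval {e : Expr} {v : Val} (h : ts.Extends ts') (hi : i ≤ ts.fetched.length)
    (he : ts.eval i e = some v) : ts'.eval i e = some v :=
  evalWith_mono (fun r x hx => regV_mono h.loaded (i + 1) i
    (fun _ hj => (h.getElem?_eq (by omega)).symm) r x hx) e he

theorem Extends.getaddr {a : Val} (h : ts.Extends ts') (ha : ts.getaddr i = some a) :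
    ts'.getaddr i = some a := by
  unfold TState.getaddr at ha ⊢
  rcases hc : ts.cmdAt i with _ | c
  · simp [hc] at ha
  have hi := (lt_length_of_cmdAt_eq_some hc).le
  rw [hc] at ha
  rw [h.cmdAt hc]
  cases c <;> first | exact h.eval hi ha | cases ha

theorem extends_update {rt : Fin n → TState n} {t : Fin n} (h : (rt t).Extends ts')
    (t' : Fin n) : (rt t').Extends (Function.update rt t ts' t') := by
  rcases eq_or_ne t' t with rfl | ht
  · simpa using h
  · rw [Function.update_of_ne ht]
    exact .refl _

end TState

namespace SState

def Keyed (ss : SState n) : StoreId n → Prop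
  | .init _ => True
  | .st t j => ss.coh t j ≠ none

structure Extends (ss ss' : SState n) : Prop where
  coh : ∀ t j k, ss.coh t j = some k → ss'.coh t j = some k
  keyOf_propTo_le : ∀ t a, ss.keyOf (ss.propTo t a) ≤ ss'.keyOf (ss'.propTo t a)

variable {ss ss' : SState n}

theorem keyOf_eq_of_coh (h : ∀ t j k, ss.coh t j = some k → ss'.coh t j = some k)
    {w : StoreId n} (hw : ss.Keyed w) : ss'.keyOf w = ss.keyOf w := by
  cases w with
  | init => rfl
  | st t j =>
    obtain ⟨k, hk⟩ := Option.ne_none_iff_exists'.mp hw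
    simp [keyOf, hk, h t j k hk]

theorem keyed_of_coh (h : ∀ t j k, ss.coh t j = some k → ss'.coh t j = some k)
    {w : StoreId n} (hw : ss.Keyed w) : ss'.Keyed w := by
  cases w with
  | init => trivial
  | st t j =>
    obtain ⟨k, hk⟩ := Option.ne_none_iff_exists'.mp hw
    simp [Keyed, h t j k hk]

theorem Extends.refl (ss : SState n) : ss.Extends ss :=
  ⟨fun _ _ _ h => h, fun _ _ => le_rfl⟩

theorem Extends.trans {ss₁ ss₂ ss₃ : SState n} (h : ss₁.Extends ss₂) (h' : ss₂.Extends ss₃) :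
    ss₁.Extends ss₃ :=
  ⟨fun t j k hk => h'.coh t j k (h.coh t j k hk),
    fun t a => (h.keyOf_propTo_le t a).trans (h'.keyOf_propTo_le t a)⟩

end SState

namespace PState

structure Extends (s s' : PState n) : Prop where
  rt : ∀ t, (s.rt t).Extends (s'.rt t)
  ss : s.ss.Extends s'.ss

theorem Extends.refl (s : PState n) : s.Extends s :=
  ⟨fun _ => .refl _, .refl _⟩

theorem Extends.trans {s₁ s₂ s₃ : PState n} (h : s₁.Extends s₂) (h' : s₂.Extends s₃) :
    s₁.Extends s₃ :=
  ⟨fun t => (h.rt t).trans (h'.rt t), h.ss.trans h'.ss⟩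

structure WellFormed (s : PState n) : Prop where
  propTo_keyed : ∀ t a, s.ss.Keyed (s.ss.propTo t a)
  committed_of_coh : ∀ t j, s.ss.coh t j ≠ none → j ∈ (s.rt t).committed

theorem initState_wellFormed : (initState n).WellFormed :=
  ⟨fun _ _ => trivial, fun _ _ h => absurd rfl h⟩

theorem WellFormed.of_extends {s s' : PState n} (hs : s.WellFormed) (h : s.Extends s')
    (hss : s'.ss = s.ss) : s'.WellFormed :=
  ⟨hss ▸ hs.propTo_keyed, fun t j hj => (h.rt t).committed (hs.committed_of_coh t j (hss ▸ hj))⟩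

end PState

section Steps

variable {P : Program n} {s s' : PState n} {e : Event n}

theorem Step.extends (hs : s.WellFormed) (h : Step P s e s') : s.Extends s' := by
  cases h with
  | fetch =>
    exact ⟨TState.extends_update ⟨List.prefix_append _ _, fun _ _ h => h, subset_rfl⟩, .refl _⟩
  | loadMem _ hnone | loadEarly _ hnone =>
    exact ⟨TState.extends_update
      ⟨List.prefix_rfl, fun _ _ => update_apply_eq_some_of_eq_none hnone _, subset_rfl⟩, .refl _⟩
  | commitSimple =>
    exact ⟨TState.extends_update ⟨List.prefix_rfl, fun _ _ h => h, Set.subset_insert _ _⟩, .refl _⟩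
  | @commitStore t i k _ _ hc =>
    have hnone : s.ss.coh t i = none := by
      by_contra hk
      exact hc.2.1 (hs.committed_of_coh t i hk)
    have hcoh : ∀ t' j k', s.ss.coh t' j = some k' →
        Function.update s.ss.coh t (Function.update (s.ss.coh t) i (some k)) t' j = some k' := by
      intro t' j k' hk'
      rcases eq_or_ne t' t with rfl | ht
      · simpa using update_apply_eq_some_of_eq_none hnone _ hk'
      · rwa [Function.update_of_ne ht]
    refine ⟨TState.extends_update ⟨List.prefix_rfl, fun _ _ h => h, Set.subset_insert _ _⟩,
      hcoh, fun t' a' => ?_⟩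
    exact (SState.keyOf_eq_of_coh hcoh (hs.propTo_keyed t' a')).ge
  | @propagate t t' i a k hk _ _ hlt =>
    refine ⟨fun _ => .refl _, fun _ _ _ h => h, fun t₀ a₀ => ?_⟩
    rcases eq_or_ne t₀ t with rfl | ht
    · rcases eq_or_ne a₀ a with rfl | ha
      · simpa [SState.keyOf, hk] using hlt.le
      · simp [Function.update_of_ne ha, SState.keyOf]
    · simp [Function.update_of_ne ht, SState.keyOf]

theorem Step.wellFormed (hs : s.WellFormed) (h : Step P s e s') : s'.WellFormed := by
  have he := h.extends hs
  cases h with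
  | fetch | loadMem | loadEarly | commitSimple => exact hs.of_extends he rfl
  | @commitStore t i k =>
    refine ⟨fun t' a => SState.keyed_of_coh he.ss.coh (hs.propTo_keyed t' a), fun t' j hj => ?_⟩
    rcases eq_or_ne t' t with rfl | ht
    · rcases eq_or_ne j i with rfl | hji
      · simp
      · simp only [Function.update_self, Function.update_of_ne hji] at hj ⊢
        exact Set.mem_insert_of_mem _ (hs.committed_of_coh t' j hj)
    · simp only [Function.update_of_ne ht] at hj ⊢
      exact hs.committed_of_coh t' j hj
  | @propagate t t' i a k hk =>
    refine ⟨fun t₀ a₀ => ?_, hs.committed_of_coh⟩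
    rcases eq_or_ne t₀ t with rfl | ht
    · rcases eq_or_ne a₀ a with rfl | ha
      · simp [SState.Keyed, hk]
      · simpa [Function.update_of_ne ha] using SState.keyed_of_coh he.ss.coh (hs.propTo_keyed t₀ a₀)
    · simpa [Function.update_of_ne ht] using SState.keyed_of_coh he.ss.coh (hs.propTo_keyed t₀ a₀)

theorem Run.wellFormed {σ : List (Event n)} (h : Run P s σ s') (hs : s.WellFormed) :
    s'.WellFormed := by
  induction h with
  | refl => exact hs
  | step hstep _ ih => exact ih (hstep.wellFormed hs)

theorem Run.extends {σ : List (Event n)} (h : Run P s σ s') (hs : s.WellFormed) :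
    s.Extends s' := by
  induction h with
  | refl => exact .refl _
  | step hstep _ ih => exact (hstep.extends hs).trans (ih (hstep.wellFormed hs))

end Steps

section Determinism

variable {P : Program n}

theorem ImmediateProp.tail {e : Event n} {σ : List (Event n)} (h : ImmediateProp (e :: σ)) :
    ImmediateProp σ :=
  fun σ₁ t i k a σ₂ hσ => h (e :: σ₁) t i k a σ₂ (by simp [hσ])

theorem Run.exists_split_step {p : PState n → Prop} {s s' : PState n} {σ : List (Event n)}
    (h : Run P s σ s') (hs : ¬ p s) (hs' : p s') :
    ∃ σ₁ e σ₂ u u', σ = σ₁ ++ e :: σ₂ ∧ Run P s σ₁ u ∧ Step P u e u' ∧ Run P u' σ₂ s' ∧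
      ¬ p u ∧ p u' := by
  induction h with
  | refl => exact absurd hs' hs
  | @step s r _ e σ hstep hrun ih =>
    by_cases hr : p r
    · exact ⟨[], e, σ, s, r, rfl, .refl s, hstep, hrun, hs, hr⟩
    · obtain ⟨σ₁, e', σ₂, u, u', rfl, h₁, hu, h₂, hpu, hpu'⟩ := ih hr hs'
      exact ⟨e :: σ₁, e', σ₂, u, u', rfl, .step hstep h₁, hu, h₂, hpu, hpu'⟩

theorem Step.eq_commitStore_of_commit {u u' : PState n} {e : Event n} {t : Fin n} {i : ℕ}
    {ea ev : Expr} (h : Step P u e u') (hst : (u.rt t).cmdAt i = some (.store ea ev))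
    (hnc : i ∉ (u.rt t).committed) (hc : i ∈ (u'.rt t).committed) :
    ∃ k a, e = .commitStore t i k a ∧ (u.rt t).getaddr i = some a ∧ u'.ss.coh t i = some k := by
  cases h with
  | @commitSimple t₀ i₀ _ hns =>
    rcases eq_or_ne t t₀ with rfl | ht
    · obtain rfl | hc := Set.mem_insert_iff.mp (by simpa using hc)
      · exact absurd trivial (hns _ hst)
      · exact absurd hc hnc
    · exact absurd (by simpa [Function.update_of_ne ht] using hc) hnc
  | @commitStore t₀ i₀ k a _ _ _ ha =>
    rcases eq_or_ne t t₀ with rfl | ht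
    · obtain rfl | hc := Set.mem_insert_iff.mp (by simpa using hc)
      · exact ⟨k, a, rfl, ha, by simp⟩
      · exact absurd hc hnc
    · exact absurd (by simpa [Function.update_of_ne ht] using hc) hnc
  | propagate => exact absurd hc hnc
  | _ =>
    simp only [Function.update_apply] at hc
    split_ifs at hc with ht
    · subst ht
      exact absurd hc hnc
    · exact absurd hc hnc

theorem Step.keyOf_propTo_lt_of_prop {u u' : PState n} {t t' : Fin n} {i : ℕ} {a : Val} {k : ℚ}
    (h : Step P u (.prop t t' i a) u') (hk : u.ss.coh t' i = some k) :
    u.ss.keyOf (u.ss.propTo t a) < k := by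
  cases h with
  | propagate hk' _ _ hlt => rwa [Option.some.inj (hk'.symm.trans hk)] at hlt

theorem Run.keyOf_propTo_lt_of_commit {s s' : PState n} {σ : List (Event n)} {t : Fin n} {i : ℕ}
    {a : Val} {ea ev : Expr} (hs : s.WellFormed) (h : Run P s σ s') (himm : ImmediateProp σ)
    (hst : (s.rt t).cmdAt i = some (.store ea ev)) (ha : (s.rt t).getaddr i = some a)
    (hnc : i ∉ (s.rt t).committed) (hc : i ∈ (s'.rt t).committed) :
    s.ss.keyOf (s.ss.propTo t a) < s'.ss.keyOf (.st t i) := by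
  obtain ⟨σ₁, e, σ₂, u, u', rfl, hsu, hstep, hu's', hnu, hu'⟩ :=
    h.exists_split_step (p := fun u => i ∈ (u.rt t).committed) hnc hc
  have hsu_ext := hsu.extends hs
  have hu := hsu.wellFormed hs
  obtain ⟨k, a', rfl, ha', hk⟩ :=
    hstep.eq_commitStore_of_commit ((hsu_ext.rt t).cmdAt hst) hnu hu'
  obtain rfl : a = a' := Option.some.inj (((hsu_ext.rt t).getaddr ha).symm.trans ha')
  obtain ⟨σ₃, rfl⟩ := himm σ₁ t i k a σ₂ rfl
  have hu'_ext := hu's'.extends (hstep.wellFormed hu)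
  cases hu's' with
  | step hprop _ =>
    calc s.ss.keyOf (s.ss.propTo t a)
        ≤ u'.ss.keyOf (u'.ss.propTo t a) :=
          (hsu_ext.trans (hstep.extends hu)).ss.keyOf_propTo_le t a
      _ < k := hprop.keyOf_propTo_lt_of_prop hk
      _ = s'.ss.keyOf (.st t i) := by simp [SState.keyOf, hu'_ext.ss.coh t i k hk]

theorem Step.isLoad_of_load {s r : PState n} {t : Fin n} {i : ℕ} {a : Val}
    (h : Step P s (.load t i a) r) :
    (∃ r ea, (s.rt t).cmdAt i = some (.load r ea)) ∧ (s.rt t).getaddr i = some a := by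
  cases h with
  | loadMem hld _ ha | loadEarly hld _ ha => exact ⟨hld, ha⟩

theorem not_finalState_of_load_bypassing_store {s r sf : PState n} {σ : List (Event n)}
    {t : Fin n} {i i' : ℕ} {a v : Val} {ea ev : Expr} (hs : s.WellFormed)
    (hr : Step P s (.load t i a) r) (hw : (r.rt t).loaded i = some (s.ss.propTo t a, v))
    (hi' : i' < i) (hst : (s.rt t).cmdAt i' = some (.store ea ev))
    (ha' : (s.rt t).getaddr i' = some a) (hnc : i' ∉ (s.rt t).committed)
    (hrun : Run P r σ sf) (himm : ImmediateProp (.load t i a :: σ)) : ¬ FinalState sf := by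
  intro hfin
  obtain ⟨⟨rg, el, hld⟩, ha⟩ := hr.isLoad_of_load
  have hrun' := Run.step hr hrun
  have hext := hrun'.extends hs
  have hcommitted : i' ∈ (sf.rt t).committed := ((hfin t).1 i').mp
    (hi'.trans (TState.lt_length_of_cmdAt_eq_some ((hext.rt t).cmdAt hld)))
  have hlt := hrun'.keyOf_propTo_lt_of_commit hs himm hst ha' hnc hcommitted
  have hle := (hfin t).2.2 i i' a hi' ((hext.rt t).getaddr ha) ((hext.rt t).getaddr ha')
    ⟨rg, el, (hext.rt t).cmdAt hld⟩ ⟨ea, ev, (hext.rt t).cmdAt hst⟩ _ v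
    (((hrun.extends (hr.wellFormed hs)).rt t).loaded i _ hw)
  rw [SState.keyOf_eq_of_coh hext.ss.coh (hs.propTo_keyed t a)] at hle
  exact hle.not_gt hlt

theorem Step.eq_of_runs_finalState {s r₁ r₂ s₁ s₂ : PState n} {e : Event n}
    {σ : List (Event n)} (hs : s.WellFormed) (h₁ : Step P s e r₁) (h₂ : Step P s e r₂)
    (hrun₁ : Run P r₁ σ s₁) (hf₁ : FinalState s₁) (hrun₂ : Run P r₂ σ s₂) (hf₂ : FinalState s₂)
    (himm : ImmediateProp (e :: σ)) : r₁ = r₂ := by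
  have h₁' := h₁
  have h₂' := h₂
  cases h₁ with
  | @loadMem _ _ _ v _ _ _ _ hw hv =>
    cases h₂ with
    | loadMem _ _ _ hw' hv' =>
      subst hw hw'
      obtain rfl := Option.some.inj (hv.symm.trans hv')
      rfl
    | loadEarly _ _ _ hi' hst ha' _ _ hnc =>
      obtain ⟨ea, ev, hst⟩ := hst
      subst hw
      exact absurd hf₁ (not_finalState_of_load_bypassing_store (v := v) hs h₁' (by simp) hi' hst
        ha' hnc hrun₁ himm)
  | loadEarly _ _ _ hi₁ hst₁ ha₁ hlast₁ hv₁ hnc₁ =>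
    cases h₂ with
    | @loadMem _ _ _ v _ _ _ _ hw hv =>
      obtain ⟨ea, ev, hst₁⟩ := hst₁
      subst hw
      exact absurd hf₂ (not_finalState_of_load_bypassing_store (v := v) hs h₂' (by simp) hi₁ hst₁
        ha₁ hnc₁ hrun₂ himm)
    | loadEarly _ _ _ hi₂ hst₂ ha₂ hlast₂ hv₂ =>
      obtain rfl := le_antisymm
        (not_lt.mp fun hlt => hlast₂ _ hlt hi₁ hst₁ (Or.inr ha₁))
        (not_lt.mp fun hlt => hlast₁ _ hlt hi₂ hst₂ (Or.inr ha₂))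
      obtain rfl := Option.some.inj (hv₁.symm.trans hv₂)
      rfl
  | _ => cases h₂; rfl

theorem Run.eq_of_finalState {s s₁ s₂ : PState n} {σ : List (Event n)} (hs : s.WellFormed)
    (h₁ : Run P s σ s₁) (hf₁ : FinalState s₁) (h₂ : Run P s σ s₂) (hf₂ : FinalState s₂)
    (himm : ImmediateProp σ) : s₁ = s₂ := by
  induction σ generalizing s with
  | nil =>
    cases h₁
    cases h₂
    rfl
  | cons e σ ih =>
    obtain _ | ⟨hstep₁, hrun₁⟩ := h₁
    obtain _ | ⟨hstep₂, hrun₂⟩ := h₂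
    obtain rfl := hstep₁.eq_of_runs_finalState hs hstep₂ hrun₁ hf₁ hrun₂ hf₂ himm
    exact ih (hstep₁.wellFormed hs) hrun₁ hrun₂ himm.tail

end Determinism

/-- the accepting state reached by a Power computation is unique:
if the initial state reaches final states `s` and `s'` via the same event sequence `σ`
(of a computation of the program), then `s = s'`. -/
theorem final_state_unique {n : ℕ} (P : Program n) (σ : List (Event n)) (s s' : PState n)
    (h : Run P (initState n) σ s) (hf : FinalState s)
    (h' : Run P (initState n) σ s') (hf' : FinalState s')
    (himm : ImmediateProp σ) :
    s = s' :=
  Run.eq_of_finalState PState.initState_wellFormed h hf h' hf' himm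

end PowerModel
end

section
/- Deleting the events of a single instruction that is po-maximal in its thread and has no incoming dependency arcs from other instructions preserves well-formedness of the trace: if T = (N, po, co, src, cf) is a trace, v ∈ N is po-maximal in its thread, and no arc of src, addr-dependence, or data-dependence leaves v into another node's dependencies, then the restriction of T to N \ {v} (restricting po, co, src and recomputing cf) is again a trace whose happens-before relation is the restriction of hb to N \ {v} (up to the cf edges incident to v). -/
/-- A trace-like structure: nodes `N` carry a thread, an address, and store/load flags,
and there are four relations: program order `po` (per-thread successor structure),
coherence order `co`, source order `src`, and conflict order `cf`. -/
structure PreTrace (N T A : Type*) where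
  thread : N → T
  addr : N → A
  isStore : N → Prop
  isLoad : N → Prop
  po : N → N → Prop
  co : N → N → Prop
  src : N → N → Prop
  cf : N → N → Prop

namespace PreTrace

variable {N T A : Type*}

/-- Well-formedness of a trace: `po` is a per-thread acyclic successor structure whose
transitive closure totally orders each thread; `co` is a per-address strict total order
on stores; `src` assigns to each load exactly one store of the same address; and
`cf = src⁻¹ ; co`. -/
def WF (τ : PreTrace N T A) : Prop :=
  (∀ a b, τ.po a b → τ.thread a = τ.thread b) ∧
  (∀ a b c, τ.po a b → τ.po a c → b = c) ∧
  (∀ a b c, τ.po b a → τ.po c a → b = c) ∧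
  (∀ a, ¬ Relation.TransGen τ.po a a) ∧
  (∀ a b, τ.thread a = τ.thread b → a ≠ b →
      Relation.TransGen τ.po a b ∨ Relation.TransGen τ.po b a) ∧
  (∀ a b, τ.co a b → τ.isStore a ∧ τ.isStore b ∧ τ.addr a = τ.addr b) ∧
  (∀ a, ¬ τ.co a a) ∧
  (∀ a b c, τ.co a b → τ.co b c → τ.co a c) ∧
  (∀ a b, τ.isStore a → τ.isStore b → τ.addr a = τ.addr b → a ≠ b →
      τ.co a b ∨ τ.co b a) ∧
  (∀ a b, τ.src a b → τ.isStore a ∧ τ.isLoad b ∧ τ.addr a = τ.addr b) ∧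
  (∀ b, τ.isLoad b → ∃! a, τ.src a b) ∧
  (∀ a b, τ.cf a b ↔ ∃ c, τ.src c a ∧ τ.co c b)

/-- Restriction of a trace to the nodes different from `v`
(restricting `po`, `co`, `src` and recomputing `cf`). -/
def restrict (τ : PreTrace N T A) (v : N) : PreTrace {x : N // x ≠ v} T A where
  thread x := τ.thread x
  addr x := τ.addr x
  isStore x := τ.isStore x
  isLoad x := τ.isLoad x
  po x y := τ.po x y
  co x y := τ.co x y
  src x y := τ.src x y
  cf x y := ∃ c : {x : N // x ≠ v}, τ.src c x ∧ τ.co c y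

/-- Happens-before relation of a trace. -/
def hb (τ : PreTrace N T A) (a b : N) : Prop :=
  τ.po a b ∨ τ.co a b ∨ τ.src a b ∨ τ.cf a b

end PreTrace

/-!
Deleting `v` only deletes the arcs incident to `v`. Since `v` has no `po`-successor, it is never
an inner node of a `po`-path, so the transitive `po`-order among the remaining nodes is unchanged.
Since `v` is the `src`-source of no load, every remaining load keeps its unique source and every
witness `c` of a `cf`-arc (a `src`-source) survives, so the recomputed `cf` is the restricted one.
-/

theorem Relation.TransGen.subtype_mk {α : Type*} {r : α → α → Prop} {p : α → Prop}
    (hr : ∀ x y, r x y → p x) {a b : α} (h : Relation.TransGen r a b) (ha : p a) (hb : p b) :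
    Relation.TransGen (fun x y : Subtype p => r x y) ⟨a, ha⟩ ⟨b, hb⟩ := by
  induction h with
  | single hab => exact .single hab
  | @tail c d _ hcd ih => exact .tail (ih (hr c d hcd)) hcd

namespace PreTrace

variable {N T A : Type*} {τ : PreTrace N T A} {v : N}

theorem transGen_restrict_po_iff (hmax : ∀ w, ¬ τ.po v w) (a b : {x : N // x ≠ v}) :
    Relation.TransGen (τ.restrict v).po a b ↔ Relation.TransGen τ.po a b :=
  ⟨Relation.TransGen.lift Subtype.val (fun _ _ h => h) a b,
    fun h => Relation.TransGen.subtype_mk (p := (· ≠ v))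
      (fun x _ hxy (hx : x = v) => hmax _ (hx ▸ hxy)) h a.2 b.2⟩

theorem restrict_cf_iff (hcf : ∀ a b, τ.cf a b ↔ ∃ c, τ.src c a ∧ τ.co c b)
    (hsrc : ∀ w, ¬ τ.src v w) (a b : {x : N // x ≠ v}) :
    (τ.restrict v).cf a b ↔ τ.cf a b := by
  rw [hcf]
  constructor
  · rintro ⟨c, hca, hcb⟩
    exact ⟨c, hca, hcb⟩
  · rintro ⟨c, hca, hcb⟩
    exact ⟨⟨c, fun hc => hsrc a (hc ▸ hca)⟩, hca, hcb⟩

theorem existsUnique_restrict_src (hsrc : ∀ w, ¬ τ.src v w) {b : {x : N // x ≠ v}}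
    (h : ∃! a, τ.src a b) : ∃! a, (τ.restrict v).src a b := by
  obtain ⟨a, hab, huniq⟩ := h
  exact ⟨⟨a, fun ha => hsrc b (ha ▸ hab)⟩, hab, fun c hcb => Subtype.ext (huniq c hcb)⟩

theorem restrict_wf (hWF : τ.WF) (hmax : ∀ w, ¬ τ.po v w) (hsrc : ∀ w, ¬ τ.src v w) :
    (τ.restrict v).WF := by
  obtain ⟨hpo_thread, hpo_succ, hpo_pred, hpo_acyc, hpo_total, hco_store, hco_irrefl, hco_trans,
    hco_total, hsrc_wf, hsrc_unique, -⟩ := hWF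
  refine ⟨fun a b => hpo_thread a b, fun a b c hab hac => Subtype.ext (hpo_succ a b c hab hac),
    fun a b c hba hca => Subtype.ext (hpo_pred a b c hba hca), fun a ha => ?_, fun a b hab hne => ?_,
    fun a b => hco_store a b, fun a => hco_irrefl a, fun a b c => hco_trans a b c,
    fun a b ha hb hab hne => hco_total a b ha hb hab (Subtype.coe_injective.ne hne),
    fun a b => hsrc_wf a b, fun b hb => existsUnique_restrict_src hsrc (hsrc_unique b hb),
    fun _ _ => Iff.rfl⟩
  · exact hpo_acyc a ((transGen_restrict_po_iff hmax a a).1 ha)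
  · simpa only [transGen_restrict_po_iff hmax] using
      hpo_total a b hab (Subtype.coe_injective.ne hne)

theorem restrict_hb_iff (hcf : ∀ a b, τ.cf a b ↔ ∃ c, τ.src c a ∧ τ.co c b)
    (hsrc : ∀ w, ¬ τ.src v w) (a b : {x : N // x ≠ v}) :
    (τ.restrict v).hb a b ↔ τ.hb a b :=
  or_congr_right <| or_congr_right <| or_congr_right <| restrict_cf_iff hcf hsrc a b

end PreTrace

/-- deleting a po-maximal node `v` with no outgoing `src`,
address-dependence or data-dependence arcs preserves well-formedness, and the
happens-before relation of the restricted trace is the restriction of the original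
happens-before relation to the remaining nodes. -/
theorem delete_maximal_node_preserves_trace {N T A : Type*}
    (τ : PreTrace N T A) (addrDep dataDep : N → N → Prop) (v : N)
    (hWF : τ.WF)
    (hmax : ∀ w, ¬ τ.po v w)
    (hnodep : ∀ w, ¬ τ.src v w ∧ ¬ addrDep v w ∧ ¬ dataDep v w) :
    (τ.restrict v).WF ∧
    (∀ a b : {x : N // x ≠ v}, (τ.restrict v).hb a b ↔ τ.hb a b) := by
  have hsrc : ∀ w, ¬ τ.src v w := fun w => (hnodep w).1
  refine ⟨PreTrace.restrict_wf hWF hmax hsrc, ?_⟩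
  obtain ⟨-, -, -, -, -, -, -, -, -, -, -, hcf⟩ := hWF
  exact PreTrace.restrict_hb_iff hcf hsrc
end
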